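/- Let μ ∈ ℂ be such that A* − μ maps D(A*) bijectively onto H with bounded inverse, and set γ = |Im μ| · ‖(A* − μ)^{-1}‖. Then for every u ∈ D(A): ‖Γ_*(A* − μ)^{-1}(A − μ)u‖_{E_*} ≤ (1 + 16√(γ(1+γ))) ‖Γu‖_E. -/

import Mathlib

open scoped ComplexInnerProductSpace

noncomputable section

/-- A maximal dissipative operator on a complex Hilbert space `H`, together with the
(derivable) data of its resolvent on the open lower half-plane and the resolvent of its
adjoint on the open upper half-plane.  Here the inner product `⟪·,·⟫` is conjugate-linear
in the first variable, so that the paper's `⟨x, y⟩` corresponds to `⟪y, x⟫`. -/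
structure MDO (H : Type*) [NormedAddCommGroup H] [InnerProductSpace ℂ H]
    [CompleteSpace H] where
  /-- The underlying densely defined operator. -/
  A : H →ₗ.[ℂ] H
  dense_dom : Dense (A.domain : Set H)
  dissipative : ∀ u : A.domain, 0 ≤ (⟪(u : H), A u⟫).im
  /-- `R z` is the bounded inverse `(A - z)⁻¹`, for `Im z < 0`. -/
  R : ℂ → H →L[ℂ] H
  R_mem : ∀ z, z.im < 0 → ∀ h : H, R z h ∈ A.domain
  R_right : ∀ z (hz : z.im < 0) (h : H), A ⟨R z h, R_mem z hz h⟩ - z • R z h = h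
  R_left : ∀ z, z.im < 0 → ∀ u : A.domain, R z (A u - z • (u : H)) = (u : H)
  dense_dom_star : Dense (A.adjoint.domain : Set H)
  anti_dissipative_star : ∀ u : A.adjoint.domain, (⟪(u : H), A.adjoint u⟫).im ≤ 0
  /-- `Rs z` is the bounded inverse `(A* - z)⁻¹`, for `Im z > 0`. -/
  Rs : ℂ → H →L[ℂ] H
  Rs_mem : ∀ z, 0 < z.im → ∀ h : H, Rs z h ∈ A.adjoint.domain
  Rs_right : ∀ z (hz : 0 < z.im) (h : H),
    A.adjoint ⟨Rs z h, Rs_mem z hz h⟩ - z • Rs z h = h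
  Rs_left : ∀ z, 0 < z.im → ∀ u : A.adjoint.domain,
    Rs z (A.adjoint u - z • (u : H)) = (u : H)

/-- A maximal dissipative operator together with boundary operators `Γ`, `Γ_*` satisfying
the abstract Lagrange identities, and the bounded compositions `ΓR z = Γ ∘ (A - z)⁻¹`
(for `Im z < 0`) and `ΓsRs z = Γ_* ∘ (A* - z)⁻¹` (for `Im z > 0`). -/
structure StrausSetting (H E Es : Type*)
    [NormedAddCommGroup H] [InnerProductSpace ℂ H] [CompleteSpace H]
    [NormedAddCommGroup E] [InnerProductSpace ℂ E] [CompleteSpace E]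
    [NormedAddCommGroup Es] [InnerProductSpace ℂ Es] [CompleteSpace Es]
    extends MDO H where
  Γ : A.domain →ₗ[ℂ] E
  Γ_bdd : ∃ C : ℝ, ∀ u : A.domain, ‖Γ u‖ ≤ C * (‖(u : H)‖ + ‖A u‖)
  Γ_dense : DenseRange Γ
  lagrange : ∀ u v : A.domain,
    ⟪(v : H), A u⟫ - ⟪A v, (u : H)⟫ = Complex.I * ⟪Γ v, Γ u⟫
  Γs : A.adjoint.domain →ₗ[ℂ] Es
  Γs_bdd : ∃ C : ℝ, ∀ u : A.adjoint.domain,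
    ‖Γs u‖ ≤ C * (‖(u : H)‖ + ‖A.adjoint u‖)
  Γs_dense : DenseRange Γs
  lagrange_star : ∀ u v : A.adjoint.domain,
    ⟪(v : H), A.adjoint u⟫ - ⟪A.adjoint v, (u : H)⟫ = -Complex.I * ⟪Γs v, Γs u⟫
  /-- `ΓR z = Γ ∘ (A - z)⁻¹` as a bounded operator `H →L[ℂ] E`, for `Im z < 0`. -/
  ΓR : ℂ → H →L[ℂ] E
  ΓR_spec : ∀ z (hz : z.im < 0) (h : H), ΓR z h = Γ ⟨R z h, R_mem z hz h⟩
  /-- `ΓsRs z = Γ_* ∘ (A* - z)⁻¹` as a bounded operator `H →L[ℂ] Es`, for `Im z > 0`. -/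
  ΓsRs : ℂ → H →L[ℂ] Es
  ΓsRs_spec : ∀ z (hz : 0 < z.im) (h : H), ΓsRs z h = Γs ⟨Rs z h, Rs_mem z hz h⟩

/-! For `u ∈ D(A)` and `v ∈ D(A*)` with `(A* - λ) v = (A - λ) u`, the two Lagrange identities
give `‖Γ_* v‖² = ‖Γ u‖² - 2 Im λ ‖u - v‖²`; for `Im μ ≥ 0` this is already the bound, with
constant `1`. For `Im μ < 0` the defect `2 |Im μ| ‖u - v‖²` is controlled through the solution
`v₁` of the same equation for `λ = Re μ + i s` in the upper half-plane: the identity for `λ`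
gives `2 s ‖u - v₁‖² ≤ ‖Γ u‖²`, while `v₁ - v = (μ - λ) (A* - μ)⁻¹ (u - v₁)`. Taking
`s ‖(A* - μ)⁻¹‖ = √(γ (1 + γ))` balances the two estimates. -/

lemma LinearPMap.norm_sub_le_of_sub_smul_eq {𝕜 X : Type*} [NontriviallyNormedField 𝕜]
    [NormedAddCommGroup X] [NormedSpace 𝕜 X] {T : X →ₗ.[𝕜] X} {mu lam : 𝕜} {R : X →L[𝕜] X}
    (hR : ∀ w : T.domain, R (T w - mu • (w : X)) = w) {x y : X} {v v₁ : T.domain}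
    (hv : T v - mu • (v : X) = y - mu • x) (hv₁ : T v₁ - lam • (v₁ : X) = y - lam • x) :
    ‖x - v‖ ≤ (1 + ‖mu - lam‖ * ‖R‖) * ‖x - v₁‖ := by
  have hdiff : (v₁ : X) - v = (mu - lam) • R (x - v₁) := by
    have h : T (v₁ - v) - mu • ((v₁ - v : T.domain) : X) = (mu - lam) • (x - v₁) := by
      rw [LinearPMap.map_sub, AddSubgroupClass.coe_sub]
      linear_combination (norm := module) hv₁ - hv
    rw [← R.map_smul, ← h, hR, AddSubgroupClass.coe_sub]
  calc ‖x - v‖ = ‖(x - v₁) + (v₁ - v)‖ := by rw [sub_add_sub_cancel]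
    _ ≤ ‖x - v₁‖ + ‖mu - lam‖ * (‖R‖ * ‖x - v₁‖) := by
      grw [norm_add_le, hdiff, norm_smul, R.le_opNorm]
    _ = (1 + ‖mu - lam‖ * ‖R‖) * ‖x - v₁‖ := by ring

lemma mul_sq_one_add_sqrt_add_le {γ : ℝ} (hγ : 0 ≤ γ) :
    γ * (1 + √(γ * (1 + γ)) + γ) ^ 2 ≤ √(γ * (1 + γ)) * ((1 + 16 * √(γ * (1 + γ))) ^ 2 - 1) := by
  set g := √(γ * (1 + γ))
  have hg : 0 ≤ g := Real.sqrt_nonneg _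
  have hg2 : g ^ 2 = γ * (1 + γ) := Real.sq_sqrt (by positivity)
  have hγg : γ ≤ g := by nlinarith
  have hg1 : g ≤ 1 + γ := by nlinarith
  calc γ * (1 + g + γ) ^ 2 ≤ γ * (2 * (1 + γ)) ^ 2 := by gcongr; linarith
    _ = 4 * (1 + γ) * g ^ 2 := by rw [hg2]; ring
    _ ≤ g * ((1 + 16 * g) ^ 2 - 1) := by nlinarith

namespace StrausSetting

variable {H E Es : Type*}
    [NormedAddCommGroup H] [InnerProductSpace ℂ H] [CompleteSpace H]
    [NormedAddCommGroup E] [InnerProductSpace ℂ E] [CompleteSpace E]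
    [NormedAddCommGroup Es] [InnerProductSpace ℂ Es] [CompleteSpace Es]
    (M : StrausSetting H E Es)

lemma norm_Γ_sq (u : M.A.domain) : ‖M.Γ u‖ ^ 2 = 2 * (⟪(u : H), M.A u⟫).im := by
  have h := congrArg Complex.im (M.lagrange u u)
  rw [← inner_conj_symm (M.A u : H), Complex.sub_conj, inner_self_eq_norm_sq_to_K] at h
  simpa [← Complex.ofReal_pow] using h.symm

lemma norm_Γs_sq (v : M.A.adjoint.domain) :
    ‖M.Γs v‖ ^ 2 = -2 * (⟪(v : H), M.A.adjoint v⟫).im := by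
  have h := congrArg Complex.im (M.lagrange_star v v)
  rw [← inner_conj_symm (M.A.adjoint v : H), Complex.sub_conj, inner_self_eq_norm_sq_to_K] at h
  simpa [← Complex.ofReal_pow] using (congrArg Neg.neg h).symm

lemma norm_Γs_sq_of_adjoint_sub_smul_eq {lam : ℂ} {u : M.A.domain} {v : M.A.adjoint.domain}
    (hv : M.A.adjoint v - lam • (v : H) = M.A u - lam • (u : H)) :
    ‖M.Γs v‖ ^ 2 = ‖M.Γ u‖ ^ 2 - 2 * lam.im * ‖(u : H) - v‖ ^ 2 := by
  have hAv : (M.A.adjoint v : H) = M.A u - lam • ((u : H) - v) := by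
    rw [smul_sub, ← sub_add, ← hv]; abel
  have hadj : ⟪(M.A.adjoint v : H), (u : H)⟫ = ⟪(v : H), M.A u⟫ :=
    LinearPMap.adjoint_isFormalAdjoint M.dense_dom v u
  have hinner : ⟪(v : H), M.A.adjoint v⟫ = (starRingEnd ℂ) ⟪(u : H), M.A u⟫
      - (starRingEnd ℂ) (lam * ⟪(u : H), (u : H) - v⟫) - lam * ⟪(v : H), (u : H) - v⟫ := by
    rw [hAv, inner_sub_right, inner_smul_right, ← hadj, hAv, inner_sub_left, inner_smul_left,
      map_mul, inner_conj_symm, inner_conj_symm]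
  have hw : lam * ⟪(v : H), (u : H) - v⟫ - lam * ⟪(u : H), (u : H) - v⟫
      = -(lam * (‖(u : H) - v‖ ^ 2 : ℝ)) := by
    rw [← mul_sub, ← inner_sub_left, ← neg_sub, inner_neg_left, inner_self_eq_norm_sq_to_K]
    simp
  have him := congrArg Complex.im hinner
  have hwim := congrArg Complex.im hw
  simp only [Complex.sub_im, Complex.conj_im, Complex.neg_im, Complex.mul_im,
    Complex.ofReal_re, Complex.ofReal_im, mul_zero] at him hwim
  rw [norm_Γs_sq, norm_Γ_sq]
  linarith

lemma norm_Γs_le_norm_Γ_of_im_nonneg {mu : ℂ} (hmu : 0 ≤ mu.im) {u : M.A.domain}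
    {v : M.A.adjoint.domain} (hv : M.A.adjoint v - mu • (v : H) = M.A u - mu • (u : H)) :
    ‖M.Γs v‖ ≤ ‖M.Γ u‖ := by
  rw [← sq_le_sq₀ (norm_nonneg _) (norm_nonneg _), M.norm_Γs_sq_of_adjoint_sub_smul_eq hv]
  have : 0 ≤ mu.im * ‖(u : H) - v‖ ^ 2 := by positivity
  linarith

lemma two_mul_mul_norm_sub_sq_le {mu : ℂ} {Rmu : H →L[ℂ] H}
    (hmu_left : ∀ w : M.A.adjoint.domain, Rmu (M.A.adjoint w - mu • (w : H)) = w)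
    {u : M.A.domain} {v : M.A.adjoint.domain}
    (hv : M.A.adjoint v - mu • (v : H) = M.A u - mu • (u : H)) {s : ℝ} (hs : 0 < s)
    (hmu : mu.im ≤ s) :
    2 * s * ‖(u : H) - v‖ ^ 2 ≤ (1 + (s - mu.im) * ‖Rmu‖) ^ 2 * ‖M.Γ u‖ ^ 2 := by
  set lam : ℂ := ⟨mu.re, s⟩
  have hlam : 0 < lam.im := hs
  set v₁ : M.A.adjoint.domain := ⟨M.Rs lam (M.A u - lam • (u : H)), M.Rs_mem lam hlam _⟩
  have hv₁ : M.A.adjoint v₁ - lam • (v₁ : H) = M.A u - lam • (u : H) := M.Rs_right lam hlam _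
  have hD₁ : 2 * s * ‖(u : H) - v₁‖ ^ 2 ≤ ‖M.Γ u‖ ^ 2 := by
    have := M.norm_Γs_sq_of_adjoint_sub_smul_eq hv₁
    nlinarith [sq_nonneg ‖M.Γs v₁‖]
  have hdist : ‖mu - lam‖ = s - mu.im := by
    have hdiff : mu - lam = ((mu.im - s : ℝ) : ℂ) * Complex.I :=
      Complex.ext (by simp [lam]) (by simp [lam])
    rw [hdiff, norm_mul, Complex.norm_I, mul_one, Complex.norm_real, Real.norm_eq_abs,
      abs_of_nonpos (by linarith), neg_sub]
  have hD : ‖(u : H) - v‖ ≤ (1 + (s - mu.im) * ‖Rmu‖) * ‖(u : H) - v₁‖ := by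
    simpa only [hdist] using LinearPMap.norm_sub_le_of_sub_smul_eq hmu_left hv hv₁
  calc 2 * s * ‖(u : H) - v‖ ^ 2
      ≤ 2 * s * ((1 + (s - mu.im) * ‖Rmu‖) * ‖(u : H) - v₁‖) ^ 2 := by gcongr
    _ = (1 + (s - mu.im) * ‖Rmu‖) ^ 2 * (2 * s * ‖(u : H) - v₁‖ ^ 2) := by ring
    _ ≤ (1 + (s - mu.im) * ‖Rmu‖) ^ 2 * ‖M.Γ u‖ ^ 2 := by gcongr

lemma norm_Γs_le_of_im_neg {mu : ℂ} (hmu : mu.im < 0) {Rmu : H →L[ℂ] H} (hR : Rmu ≠ 0)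
    (hmu_left : ∀ w : M.A.adjoint.domain, Rmu (M.A.adjoint w - mu • (w : H)) = w)
    {u : M.A.domain} {v : M.A.adjoint.domain}
    (hv : M.A.adjoint v - mu • (v : H) = M.A u - mu • (u : H)) :
    ‖M.Γs v‖ ≤ (1 + 16 * √((|mu.im| * ‖Rmu‖) * (1 + |mu.im| * ‖Rmu‖))) * ‖M.Γ u‖ := by
  set γ := |mu.im| * ‖Rmu‖
  set g := √(γ * (1 + γ))
  have hr : 0 < ‖Rmu‖ := norm_pos_iff.mpr hR
  have hγ : 0 < γ := mul_pos (abs_pos.mpr hmu.ne) hr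
  have hg : 0 < g := Real.sqrt_pos.mpr (by positivity)
  have hs : 0 < g / ‖Rmu‖ := div_pos hg hr
  have hD := M.two_mul_mul_norm_sub_sq_le hmu_left hv hs (by linarith)
  have hc : 1 + (g / ‖Rmu‖ - mu.im) * ‖Rmu‖ = 1 + g + γ := by
    rw [sub_mul, div_mul_cancel₀ _ hr.ne']
    simp only [γ, abs_of_neg hmu]
    ring
  have hγD : 2 * |mu.im| * g * ‖(u : H) - v‖ ^ 2
      = γ * (2 * (g / ‖Rmu‖) * ‖(u : H) - v‖ ^ 2) := by
    simp only [γ]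
    field_simp
  rw [hc] at hD
  rw [← sq_le_sq₀ (norm_nonneg _) (by positivity)]
  refine le_of_mul_le_mul_left ?_ hg
  calc g * ‖M.Γs v‖ ^ 2 = g * ‖M.Γ u‖ ^ 2 + 2 * |mu.im| * g * ‖(u : H) - v‖ ^ 2 := by
        rw [M.norm_Γs_sq_of_adjoint_sub_smul_eq hv, abs_of_neg hmu]; ring
    _ ≤ g * ‖M.Γ u‖ ^ 2 + γ * ((1 + g + γ) ^ 2 * ‖M.Γ u‖ ^ 2) := by rw [hγD]; gcongr
    _ = g * ‖M.Γ u‖ ^ 2 + γ * (1 + g + γ) ^ 2 * ‖M.Γ u‖ ^ 2 := by ring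
    _ ≤ g * ‖M.Γ u‖ ^ 2 + g * ((1 + 16 * g) ^ 2 - 1) * ‖M.Γ u‖ ^ 2 := by
        gcongr _ + ?_ * _; exact mul_sq_one_add_sqrt_add_le hγ.le
    _ = g * ((1 + 16 * g) * ‖M.Γ u‖) ^ 2 := by ring

end StrausSetting

/-- Norm estimate for the extended characteristic function: if `A* - μ`
has a bounded two-sided inverse `Rmu` and `γ = |Im μ| ‖(A* - μ)⁻¹‖`, then for every
`u ∈ D(A)`, `‖Γ_*(A* - μ)⁻¹(A - μ)u‖ ≤ (1 + 16 √(γ(1+γ))) ‖Γu‖`. -/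
theorem stmt8 {H E Es : Type*}
    [NormedAddCommGroup H] [InnerProductSpace ℂ H] [CompleteSpace H]
    [NormedAddCommGroup E] [InnerProductSpace ℂ E] [CompleteSpace E]
    [NormedAddCommGroup Es] [InnerProductSpace ℂ Es] [CompleteSpace Es]
    (M : StrausSetting H E Es) (mu : ℂ)
    (Rmu : H →L[ℂ] H) (hmu_mem : ∀ h : H, Rmu h ∈ M.A.adjoint.domain)
    (hmu_right : ∀ h : H, M.A.adjoint ⟨Rmu h, hmu_mem h⟩ - mu • Rmu h = h)
    (hmu_left : ∀ v : M.A.adjoint.domain, Rmu (M.A.adjoint v - mu • (v : H)) = (v : H))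
    (u : M.A.domain) :
    ‖M.Γs ⟨Rmu (M.A u - mu • (u : H)), hmu_mem _⟩‖
      ≤ (1 + 16 * Real.sqrt ((|mu.im| * ‖Rmu‖) * (1 + |mu.im| * ‖Rmu‖))) * ‖M.Γ u‖ := by
  have hv := hmu_right (M.A u - mu • (u : H))
  rcases le_or_gt 0 mu.im with hmu | hmu
  · exact (M.norm_Γs_le_norm_Γ_of_im_nonneg hmu hv).trans
      (le_mul_of_one_le_left (norm_nonneg _) (le_add_of_nonneg_right (by positivity)))
  rcases eq_or_ne Rmu 0 with hR | hR
  · have hzero : (⟨Rmu (M.A u - mu • (u : H)), hmu_mem _⟩ : M.A.adjoint.domain) = 0 :=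
      Subtype.ext (by simp [hR])
    rw [hzero, map_zero, norm_zero]
    positivity
  · exact M.norm_Γs_le_of_im_neg hmu hR hmu_left hv
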